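/- arXiv:0905.2681 — 4 statements merged into one kernel-verified Lean document; each statement's English description precedes it below -/
import Mathlib

section
/- Let p be an odd prime with p ≡ 1 (mod 4) and let a be a quadratic non-residue mod p. Then there are no integers x₁, x₂, x₃ with 1 + a·x₁² + p·x₂² = a·p·x₃². -/
/-! Reducing modulo `p` gives `a x₁² = -1` in `ZMod p`, so `a = -(x₁⁻¹)²`. Since `p ≡ 1 (mod 4)`,
`-1` is a square modulo `p`, hence so is `a`. -/

theorem isSquare_of_one_add_mul_sq_eq_zero {R : Type*} [CommRing R] {a x : R}
    (hneg : IsSquare (-1 : R)) (h : 1 + a * x ^ 2 = 0) : IsSquare a := by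
  obtain ⟨c, hc⟩ := hneg
  exact ⟨c * a * x, by linear_combination a * h + (a * x) ^ 2 * hc⟩

theorem no_solution_of_nonresidue_general (p : ℕ) (a : ℤ) (hp : p.Prime)
    (hp1 : p % 4 = 1) (ha : ¬ ∃ y : ℤ, (y : ZMod p) ^ 2 = (a : ZMod p)) :
    ¬ ∃ x₁ x₂ x₃ : ℤ, 1 + a * x₁ ^ 2 + (p : ℤ) * x₂ ^ 2 = a * (p : ℤ) * x₃ ^ 2 := by
  have := Fact.mk hp
  rintro ⟨x₁, x₂, x₃, h⟩
  have hmod : (1 : ZMod p) + a * x₁ ^ 2 = 0 := by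
    simpa using congrArg (Int.cast : ℤ → ZMod p) h
  have hneg : IsSquare (-1 : ZMod p) := ZMod.exists_sq_eq_neg_one_iff.mpr (by omega)
  obtain ⟨c, hc⟩ := isSquare_of_one_add_mul_sq_eq_zero hneg hmod
  exact ha ⟨c.cast, by rw [ZMod.intCast_cast, ZMod.cast_id', id, hc, sq]⟩

/-- Let `p` be an odd prime with `p ≡ 1 (mod 4)` and let `a` be a quadratic
non-residue mod `p`. Then there are no integers `x₁, x₂, x₃` with
`1 + a·x₁² + p·x₂² = a·p·x₃²`. -/
theorem no_solution_of_nonresidue (p : ℕ) (a : ℤ) (hp : p.Prime) (hodd : p ≠ 2)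
    (hp1 : p % 4 = 1) (ha : ¬ ∃ y : ℤ, (y : ZMod p) ^ 2 = (a : ZMod p)) :
    ¬ ∃ x₁ x₂ x₃ : ℤ, 1 + a * x₁ ^ 2 + (p : ℤ) * x₂ ^ 2 = a * (p : ℤ) * x₃ ^ 2 :=
  no_solution_of_nonresidue_general p a hp hp1 ha
end

section
/- Let p be an odd prime with p ≡ 1 (mod 4) and a a quadratic non-residue mod p. If integers x₀, x₁, x₂, x₃ satisfy x₀² - a·x₁² - p·x₂² + a·p·x₃² = 1 and x₀ = 0, then a contradiction follows; i.e., any integral solution has x₀ ≠ 0. -/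
/-! Modulo `p` the equation with `x₀ = 0` reads `a x₁² = -1`, so `a = -1 / x₁²`, which is a
square because `-1` is a square modulo a prime `p ≡ 1 (mod 4)`. -/

theorem isSquare_of_mul_sq_eq_neg_one {K : Type*} [Field K] {a x : K}
    (hneg : IsSquare (-1 : K)) (h : a * x ^ 2 = -1) : IsSquare a := by
  obtain ⟨c, hc⟩ := hneg
  have hx : x ≠ 0 := by
    rintro rfl
    simp at h
  refine ⟨c / x, ?_⟩
  field_simp
  rw [h, hc, sq]

theorem ZMod.exists_intCast_sq_eq_of_isSquare {n : ℕ} {a : ZMod n} (h : IsSquare a) :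
    ∃ y : ℤ, (y : ZMod n) ^ 2 = a := by
  obtain ⟨c, rfl⟩ := h
  obtain ⟨y, rfl⟩ := ZMod.intCast_surjective c
  exact ⟨y, sq _⟩

theorem x0_ne_zero_of_solution_general (p : ℕ) (a : ℤ) (hp : p.Prime)
    (hp1 : p % 4 = 1) (ha : ¬ ∃ y : ℤ, (y : ZMod p) ^ 2 = (a : ZMod p))
    (x₀ x₁ x₂ x₃ : ℤ)
    (hsol : x₀ ^ 2 - a * x₁ ^ 2 - (p : ℤ) * x₂ ^ 2 + a * (p : ℤ) * x₃ ^ 2 = 1)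
    (h0 : x₀ = 0) : False := by
  have : Fact p.Prime := ⟨hp⟩
  subst h0
  have hmod : (a : ZMod p) * (x₁ : ZMod p) ^ 2 = -1 := by
    have := congrArg (Int.cast : ℤ → ZMod p) hsol
    push_cast [ZMod.natCast_self] at this
    linear_combination -this
  have hneg : IsSquare (-1 : ZMod p) := ZMod.exists_sq_eq_neg_one_iff.mpr (by omega)
  exact ha (ZMod.exists_intCast_sq_eq_of_isSquare (isSquare_of_mul_sq_eq_neg_one hneg hmod))

/-- Let `p` be an odd prime with `p ≡ 1 (mod 4)` and `a` a quadratic non-residue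
mod `p`. If integers `x₀, x₁, x₂, x₃` satisfy `x₀² - a x₁² - p x₂² + a p x₃² = 1`
and `x₀ = 0`, a contradiction follows: any integral solution has `x₀ ≠ 0`. -/
theorem x0_ne_zero_of_solution (p : ℕ) (a : ℤ) (hp : p.Prime) (hodd : p ≠ 2)
    (hp1 : p % 4 = 1) (ha : ¬ ∃ y : ℤ, (y : ZMod p) ^ 2 = (a : ZMod p))
    (x₀ x₁ x₂ x₃ : ℤ)
    (hsol : x₀ ^ 2 - a * x₁ ^ 2 - (p : ℤ) * x₂ ^ 2 + a * (p : ℤ) * x₃ ^ 2 = 1)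
    (h0 : x₀ = 0) : False :=
  x0_ne_zero_of_solution_general p a hp hp1 ha x₀ x₁ x₂ x₃ hsol h0
end

section
/- Let p ≡ 1 (mod 4) be prime and a a quadratic non-residue mod p. The set Γ of matrices ((x₀ + x₁√a, √p(x₂ + x₃√a)), (√p(x₂ - x₃√a), x₀ - x₁√a)) with integers xᵢ satisfying x₀² - a·x₁² - p·x₂² + a·p·x₃² = 1 is torsion-free as a subgroup of SL(2,ℝ) modulo ±Id: any element of finite order equals ±Id. -/
/-!
An element `M` of `Γ` has determinant `1` and trace `2x₀`, so by Cayley–Hamilton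
`M² = 2x₀ M - 1`, and inductively `Mⁿ⁺¹ = cₙ₊₁ M - cₙ` for the Lucas sequence
`c₀ = 0, c₁ = 1, cₙ₊₂ = 2x₀ cₙ₊₁ - cₙ`. Reducing `x₀² - a x₁² - p x₂² + a p x₃² = 1` mod `p`
shows `x₀ ≠ 0`: otherwise `a x₁² ≡ -1`, and as `-1` is a square mod `p ≡ 1 (mod 4)`, so would
be `a`. Hence `|2x₀| ≥ 2`, which makes `|cₙ|` strictly increasing, so `cₙ ≠ 0` for `n > 0`.
Then `Mⁿ = ±1` gives `cₙ M = cₙ₋₁ ± 1` with `cₙ ≠ 0`, so `M` is scalar, i.e. `x₁ = x₂ = x₃ = 0`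
and `x₀ = ±1`.
-/

open Matrix

/-- The matrix `((x₀ + x₁√a, √p(x₂ + x₃√a)), (√p(x₂ - x₃√a), x₀ - x₁√a))`. -/
noncomputable def gammaMat (p : ℕ) (a : ℤ) (x₀ x₁ x₂ x₃ : ℤ) : Matrix (Fin 2) (Fin 2) ℝ :=
  !![(x₀ : ℝ) + x₁ * Real.sqrt a, Real.sqrt p * ((x₂ : ℝ) + x₃ * Real.sqrt a);
     Real.sqrt p * ((x₂ : ℝ) - x₃ * Real.sqrt a), (x₀ : ℝ) - x₁ * Real.sqrt a]

/-- The Lucas sequence `Uₙ(t, 1)`, i.e. `lucasU t (n + 1) = Uₙ(t / 2)` for the Chebyshev `U`. -/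
def lucasU (t : ℤ) : ℕ → ℤ
  | 0 => 0
  | 1 => 1
  | (n + 2) => t * lucasU t (n + 1) - lucasU t n

lemma abs_lucasU_lt_abs_lucasU_succ {t : ℤ} (ht : 2 ≤ |t|) (n : ℕ) :
    |lucasU t n| < |lucasU t (n + 1)| := by
  induction n with
  | zero => simp [lucasU]
  | succ n ih =>
    have h : |t * lucasU t (n + 1)| - |lucasU t n| ≤ |lucasU t (n + 2)| :=
      abs_sub_abs_le_abs_sub _ _
    rw [abs_mul] at h
    nlinarith [abs_nonneg (lucasU t (n + 1))]

lemma lucasU_succ_ne_zero {t : ℤ} (ht : 2 ≤ |t|) (n : ℕ) : lucasU t (n + 1) ≠ 0 :=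
  abs_pos.mp ((abs_nonneg _).trans_lt (abs_lucasU_lt_abs_lucasU_succ ht n))

section Ring

variable {A : Type*} [Ring A] {M : A} {t : ℤ}

lemma pow_succ_eq_lucasU (hM : M * M = t * M - 1) (n : ℕ) :
    M ^ (n + 1) = lucasU t (n + 1) * M - lucasU t n := by
  induction n with
  | zero => simp [lucasU]
  | succ n ih =>
    rw [pow_succ, ih, sub_mul, mul_assoc, hM, lucasU]
    push_cast
    rw [mul_sub, mul_one, ← mul_assoc, Int.cast_comm, sub_mul]
    abel

lemma exists_intCast_mul_eq_intCast_of_pow_eq_intCast (ht : 2 ≤ |t|) (hM : M * M = t * M - 1)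
    {n : ℕ} (hn : 0 < n) {k : ℤ} (hk : M ^ n = k) :
    ∃ c d : ℤ, c ≠ 0 ∧ (c : A) * M = d := by
  obtain ⟨m, rfl⟩ := Nat.exists_eq_add_of_lt hn
  rw [zero_add, pow_succ_eq_lucasU hM, sub_eq_iff_eq_add] at hk
  exact ⟨_, k + lucasU t m, lucasU_succ_ne_zero ht m, by push_cast; exact hk⟩

end Ring

lemma Matrix.mul_self_eq_trace_smul_sub_det_smul {R : Type*} [CommRing R]
    (M : Matrix (Fin 2) (Fin 2) R) : M * M = M.trace • M - M.det • 1 := by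
  ext i j
  fin_cases i <;> fin_cases j <;>
    simp only [Fin.zero_eta, Fin.mk_one, mul_apply, Fin.sum_univ_two, trace_fin_two, det_fin_two,
      Matrix.sub_apply, Matrix.smul_apply, smul_eq_mul, one_apply_eq, one_apply_ne zero_ne_one,
      one_apply_ne one_ne_zero] <;> ring

lemma Matrix.mem_range_scalar_of_intCast_mul_eq_intCast {n K : Type*} [Fintype n] [DecidableEq n]
    [Field K] [CharZero K] {M : Matrix n n K} {c d : ℤ} (hc : c ≠ 0)
    (h : (c : Matrix n n K) * M = d) : M ∈ Set.range (scalar n) := by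
  rw [← diagonal_intCast, ← diagonal_intCast, ← smul_eq_diagonal_mul] at h
  refine ⟨(c : K)⁻¹ * d, ?_⟩
  rw [← (inv_smul_eq_iff₀ (Int.cast_ne_zero.mpr hc)).mpr h.symm, map_mul, smul_eq_diagonal_mul]
  rfl

lemma ZMod.isSquare_of_mul_sq_eq_neg_one {p : ℕ} [Fact p.Prime] (hp : p % 4 ≠ 3)
    {a x : ZMod p} (h : a * x ^ 2 = -1) : IsSquare a := by
  have hx : x ≠ 0 := by rintro rfl; simp at h
  have ha : a = -1 * (x⁻¹) ^ 2 := by field_simp; linear_combination h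
  exact ha ▸ (ZMod.exists_sq_eq_neg_one_iff.mpr hp).mul (IsSquare.sq _)

section Gamma

variable {p : ℕ} {a : ℤ} {x₀ x₁ x₂ x₃ : ℤ}

lemma x₀_ne_zero_of_nonresidue (hp : p.Prime) (hp1 : p % 4 = 1)
    (ha : ¬ ∃ y : ℤ, (y : ZMod p) ^ 2 = (a : ZMod p))
    (hsol : x₀ ^ 2 - a * x₁ ^ 2 - (p : ℤ) * x₂ ^ 2 + a * (p : ℤ) * x₃ ^ 2 = 1) : x₀ ≠ 0 := by
  have : Fact p.Prime := ⟨hp⟩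
  rintro rfl
  have hmod := congrArg (Int.cast : ℤ → ZMod p) hsol
  push_cast at hmod
  rw [ZMod.natCast_self] at hmod
  have hneg : (a : ZMod p) * x₁ ^ 2 = -1 := by linear_combination -hmod
  obtain ⟨r, hr⟩ := ZMod.isSquare_of_mul_sq_eq_neg_one (by omega) hneg
  obtain ⟨y, rfl⟩ := ZMod.intCast_surjective r
  exact ha ⟨y, by rw [hr, sq]⟩

lemma trace_gammaMat : (gammaMat p a x₀ x₁ x₂ x₃).trace = 2 * x₀ := by
  rw [gammaMat, trace_fin_two_of]
  ring

lemma det_gammaMat (ha0 : 0 < a)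
    (hsol : x₀ ^ 2 - a * x₁ ^ 2 - (p : ℤ) * x₂ ^ 2 + a * (p : ℤ) * x₃ ^ 2 = 1) :
    (gammaMat p a x₀ x₁ x₂ x₃).det = 1 := by
  have hsa : Real.sqrt a ^ 2 = a := Real.sq_sqrt (by positivity)
  have hsp : Real.sqrt p ^ 2 = p := Real.sq_sqrt (by positivity)
  have hsolR : (x₀ : ℝ) ^ 2 - a * x₁ ^ 2 - p * x₂ ^ 2 + a * p * x₃ ^ 2 = 1 := by exact_mod_cast hsol
  simp only [gammaMat, det_fin_two_of]
  linear_combination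
    hsolR - (x₁ ^ 2 - p * x₃ ^ 2 : ℝ) * hsa - ((x₂ : ℝ) ^ 2 - x₃ ^ 2 * Real.sqrt a ^ 2) * hsp

lemma gammaMat_mul_self (ha0 : 0 < a)
    (hsol : x₀ ^ 2 - a * x₁ ^ 2 - (p : ℤ) * x₂ ^ 2 + a * (p : ℤ) * x₃ ^ 2 = 1) :
    gammaMat p a x₀ x₁ x₂ x₃ * gammaMat p a x₀ x₁ x₂ x₃
      = ((2 * x₀ : ℤ) : Matrix (Fin 2) (Fin 2) ℝ) * gammaMat p a x₀ x₁ x₂ x₃ - 1 := by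
  rw [mul_self_eq_trace_smul_sub_det_smul, trace_gammaMat, det_gammaMat ha0 hsol, one_smul,
    ← zsmul_eq_mul, ← Int.cast_smul_eq_zsmul ℝ]
  push_cast
  rfl

lemma eq_zero_of_gammaMat_mem_range_scalar (hp : 0 < p) (ha0 : 0 < a)
    (h : gammaMat p a x₀ x₁ x₂ x₃ ∈ Set.range (scalar (Fin 2))) :
    x₁ = 0 ∧ x₂ = 0 ∧ x₃ = 0 := by
  obtain ⟨r, hr⟩ := h
  have hsp : Real.sqrt p ≠ 0 := by positivity
  have hsa : Real.sqrt a ≠ 0 := by positivity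
  rw [scalar_apply, diagonal_fin_two, gammaMat] at hr
  simp only [← Matrix.ext_iff, Fin.forall_fin_two, of_apply, cons_val', cons_val_zero,
    cons_val_one, cons_val_fin_one] at hr
  obtain ⟨⟨h₀₀, h₀₁⟩, h₁₀, h₁₁⟩ := hr
  replace h₀₁ := (mul_eq_zero.mp h₀₁.symm).resolve_left hsp
  replace h₁₀ := (mul_eq_zero.mp h₁₀.symm).resolve_left hsp
  refine ⟨?_, ?_, ?_⟩
  · exact_mod_cast (mul_eq_zero.mp (by linarith : (x₁ : ℝ) * Real.sqrt a = 0)).resolve_right hsa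
  · exact_mod_cast (by linarith : (x₂ : ℝ) = 0)
  · exact_mod_cast (mul_eq_zero.mp (by linarith : (x₃ : ℝ) * Real.sqrt a = 0)).resolve_right hsa

lemma gammaMat_zero_zero_zero : gammaMat p a x₀ 0 0 0 = scalar (Fin 2) (x₀ : ℝ) := by
  rw [scalar_apply, diagonal_fin_two]
  simp [gammaMat]

end Gamma

/-- For `p ≡ 1 (mod 4)` prime and `a > 0` a quadratic non-residue mod `p`, the group
`Γ_{p,a}` of such matrices with `x₀² - a x₁² - p x₂² + a p x₃² = 1` is torsion free
modulo `±Id`: any element of finite order equals `±Id`. -/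
theorem gamma_torsionFree (p : ℕ) (a : ℤ) (hp : p.Prime) (hp1 : p % 4 = 1)
    (ha0 : 0 < a) (ha : ¬ ∃ y : ℤ, (y : ZMod p) ^ 2 = (a : ZMod p))
    (x₀ x₁ x₂ x₃ : ℤ)
    (hsol : x₀ ^ 2 - a * x₁ ^ 2 - (p : ℤ) * x₂ ^ 2 + a * (p : ℤ) * x₃ ^ 2 = 1)
    (n : ℕ) (hn : 0 < n)
    (hfin : (gammaMat p a x₀ x₁ x₂ x₃) ^ n = 1 ∨ (gammaMat p a x₀ x₁ x₂ x₃) ^ n = -1) :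
    gammaMat p a x₀ x₁ x₂ x₃ = 1 ∨ gammaMat p a x₀ x₁ x₂ x₃ = -1 := by
  have ht : 2 ≤ |2 * x₀| := by
    rw [abs_mul, abs_two]
    linarith [Int.one_le_abs (x₀_ne_zero_of_nonresidue hp hp1 ha hsol)]
  obtain ⟨k, hk⟩ : ∃ k : ℤ, gammaMat p a x₀ x₁ x₂ x₃ ^ n = k :=
    hfin.elim (fun h => ⟨1, by simp [h]⟩) (fun h => ⟨-1, by simp [h]⟩)
  obtain ⟨c, d, hc, hcd⟩ := exists_intCast_mul_eq_intCast_of_pow_eq_intCast ht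
    (gammaMat_mul_self ha0 hsol) hn hk
  obtain ⟨rfl, rfl, rfl⟩ := eq_zero_of_gammaMat_mem_range_scalar hp.pos ha0
    (mem_range_scalar_of_intCast_mul_eq_intCast hc hcd)
  rcases sq_eq_one_iff.mp (by linear_combination hsol) with rfl | rfl
  · left; rw [gammaMat_zero_zero_zero, Int.cast_one, map_one]
  · right; rw [gammaMat_zero_zero_zero, Int.cast_neg, Int.cast_one, map_neg, map_one]
end

section
/- Let γ = ((a,c̄),(c,ā)) ∈ SU(1,1) with |a|² - |c|² = 1 and c ≠ 0, and let F(z) = 1 - z·z̄. Then the maximum of F over the isometric circle {z : |cz + ā| = 1} equals 2/(|a| + 1). -/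
/-! The isometric circle `‖c z + ā‖ = 1` is the circle of radius `1/‖c‖` about `-ā/c`, whose
centre lies at distance `‖a‖/‖c‖` from the origin. So `‖z‖` is minimised on it at
`(‖a‖ - 1)/‖c‖`, and `‖c‖² = (‖a‖ - 1)(‖a‖ + 1)` turns `1 - ((‖a‖ - 1)/‖c‖)²` into
`2/(‖a‖ + 1)`. -/

section NormedField

variable {𝕜 : Type*} [NormedField 𝕜] {c z w : 𝕜}

theorem norm_sub_one_le_norm_mul_norm_of_norm_mul_add_eq_one (h : ‖c * z + w‖ = 1) :
    ‖w‖ - 1 ≤ ‖c‖ * ‖z‖ := by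
  have := norm_sub_le (c * z + w) (c * z)
  rw [add_sub_cancel_left, h, norm_mul] at this
  linarith

theorem exists_norm_mul_add_eq_one_and_norm_mul_norm_eq [NormedAlgebra ℝ 𝕜]
    (hc : c ≠ 0) (hw : 1 ≤ ‖w‖) : ∃ z : 𝕜, ‖c * z + w‖ = 1 ∧ ‖c‖ * ‖z‖ = ‖w‖ - 1 := by
  have hw₀ : ‖w‖ ≠ 0 := by positivity
  refine ⟨((‖w‖⁻¹ - 1) • w) / c, ?_, ?_⟩
  · rw [mul_div_cancel₀ _ hc, sub_smul, one_smul, sub_add_cancel, norm_smul, norm_inv,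
      norm_norm, inv_mul_cancel₀ hw₀]
  · rw [norm_div, mul_div_cancel₀ _ (norm_ne_zero_iff.mpr hc), norm_smul, Real.norm_eq_abs,
      abs_of_nonpos (by simp [inv_le_one_of_one_le₀ hw]), neg_sub, sub_mul, one_mul,
      inv_mul_cancel₀ hw₀]

end NormedField

theorem one_sub_div_sq_eq_two_div {A C : ℝ} (h : A ^ 2 - C ^ 2 = 1) (hC : C ≠ 0) :
    1 - ((A - 1) / C) ^ 2 = 2 / (A + 1) := by
  have hA : A + 1 ≠ 0 := by
    rintro hA
    have : C ^ 2 = 0 := by nlinarith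
    exact hC (pow_eq_zero_iff two_ne_zero |>.mp this)
  field_simp
  linear_combination (1 - A) * h

/-- Let `γ = ((a, c̄),(c, ā)) ∈ SU(1,1)` with `|a|² - |c|² = 1` and `c ≠ 0`, and let
`F(z) = 1 - |z|²`. The maximum of `F` over the isometric circle `{z : |cz + ā| = 1}`
equals `2/(|a| + 1)`. -/
theorem max_F_on_isometric_circle (a c : ℂ)
    (h : ‖a‖ ^ 2 - ‖c‖ ^ 2 = 1) (hc : c ≠ 0) :
    IsGreatest ((fun z : ℂ => 1 - ‖z‖ ^ 2) ''
        {z : ℂ | ‖c * z + (starRingEnd ℂ) a‖ = 1})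
      (2 / (‖a‖ + 1)) := by
  have hc₀ : 0 < ‖c‖ := norm_pos_iff.mpr hc
  have ha : 1 ≤ ‖a‖ := by nlinarith [norm_nonneg a]
  rw [← one_sub_div_sq_eq_two_div h hc₀.ne']
  constructor
  · obtain ⟨z, hz, hz_norm⟩ :=
      exists_norm_mul_add_eq_one_and_norm_mul_norm_eq hc (w := (starRingEnd ℂ) a)
        (by rwa [Complex.norm_conj])
    refine ⟨z, hz, ?_⟩
    rw [Complex.norm_conj] at hz_norm
    rw [← hz_norm, mul_div_cancel_left₀ _ hc₀.ne']
  · rintro _ ⟨z, hz, rfl⟩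
    have hz_norm := norm_sub_one_le_norm_mul_norm_of_norm_mul_add_eq_one hz
    rw [Complex.norm_conj, ← div_le_iff₀' hc₀] at hz_norm
    have h_nonneg : 0 ≤ (‖a‖ - 1) / ‖c‖ := div_nonneg (by linarith) hc₀.le
    dsimp only
    gcongr
end
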